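/- Let n ∈ ℕ, q ∈ ℝ and let p ∈ ℕ with p ≥ 2. Define F on (0,∞) × (ℝ∖{0}) × ℝ by F(r,w,v) = (1, v, −((n−1)/r)·v − r^q·w^{p+2} + 2w^{−1}·v²) (the MEMS-like radial profile equation written as an extended autonomous first-order system in (r, w, v) with w = u^{−1}) and F₀(r,w,v) = (0, v, −r^q·w^{p+2} + 2w^{−1}·v²). Then: (a) if p is even, with type exponents (0,2,p+3) and order p+2 (k = p+1): F₀(r, s²w, s^{p+3}v) = (0, s^{p+3}·v, s^{2p+4}·(−r^q w^{p+2} + 2w^{−1}v²)) for all s > 0, and for each component i with type exponent α_i, s^{−(k+α_i)}·|F_i(r, s²w, s^{p+3}v) − s^{k+α_i}·F₀ᵢ(r,w,v)| → 0 as s → +∞, uniformly for (w,v) with w^{2(p+3)} + v⁴ = 1 and r in any compact subset of (0,∞); (b) if p is odd, the same holds with type exponents (0,1,(p+3)/2) and order (p+3)/2 (k = (p+1)/2), scalings w ↦ sw, v ↦ s^{(p+3)/2}v, and uniformity on {w^{p+3} + v² = 1} and compact r-sets. Hence F is asymptotically quasi-homogeneous of type (0,2,p+3) and order p+2 when p is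 even, and of type (0,1,(p+3)/2) and order (p+3)/2 when p is odd. -/
import Mathlib


open Real Set Filter

/-- The MEMS-like radial profile system
`(r, w, v) ↦ (1, v, -((n-1)/r) v - r^q w^{p+2} + 2 w⁻¹ v²)` (with `w = u⁻¹`). -/
noncomputable def FMEMS (n : ℕ) (q : ℝ) (p : ℕ) (P : ℝ × ℝ × ℝ) : ℝ × ℝ × ℝ :=
  (1, P.2.2,
   -(((n : ℝ) - 1) / P.1) * P.2.2 - P.1 ^ q * P.2.1 ^ (p + 2)
     + 2 * (P.2.1)⁻¹ * P.2.2 ^ 2)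

/-- The quasi-homogeneous principal part `(0, v, -r^q w^{p+2} + 2 w⁻¹ v²)`. -/
noncomputable def FMEMS₀ (q : ℝ) (p : ℕ) (P : ℝ × ℝ × ℝ) : ℝ × ℝ × ℝ :=
  (0, P.2.2, -(P.1 ^ q) * P.2.1 ^ (p + 2) + 2 * (P.2.1)⁻¹ * P.2.2 ^ 2)

private lemma pow_inv_helper (s : ℝ) (hs : s ≠ 0) (c a b : ℕ) (h : c + a = b) :
    (s^c)⁻¹ * s^b = s^a := by
  subst h; rw [pow_add, inv_mul_cancel_left₀ (pow_ne_zero _ hs)]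

private lemma aux_key (s e A B δ : ℝ) (hs : 1 ≤ s) (he : 1 ≤ e) (hB : 0 ≤ B)
    (hBA : B ≤ A) (hA : A < s * δ) : s ^ (-e) * B < δ := by
  have hs0 : (0:ℝ) < s := lt_of_lt_of_le one_pos hs
  have hδ : 0 < δ := by nlinarith
  have h1 : s ^ (-e) ≤ s⁻¹ := by
    rw [Real.rpow_neg hs0.le]
    apply inv_anti₀ hs0
    calc s = s ^ (1:ℝ) := (Real.rpow_one s).symm
      _ ≤ s ^ e := Real.rpow_le_rpow_of_exponent_le hs he
  have h2 : s ^ (-e) * B ≤ s⁻¹ * A :=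
    mul_le_mul h1 hBA hB (inv_nonneg.2 hs0.le)
  have h3 : s⁻¹ * A < δ := by
    rw [inv_mul_eq_div, div_lt_iff₀ hs0]; nlinarith
  linarith

private lemma collapse (s : ℝ) (hs : 0 < s) (a b : ℝ) (N : ℕ) (h : a + (N:ℝ) = b) (M : ℝ) :
    s ^ a * (s ^ N * M) = s ^ b * M := by
  rw [← Real.rpow_natCast s N, ← mul_assoc, ← Real.rpow_add hs, h]

private lemma habs (s c v : ℝ) (hs0 : 0 < s) (N : ℕ) :
    |(-c) * (s^N * v)| = s^N * |c * v| := by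
  simp only [abs_mul, abs_neg, abs_pow, abs_of_pos hs0]; ring

/-- (a) If `p` is even, with type `(0,2,p+3)` and order `p+2`
(`k = p+1`), `FMEMS₀` is quasi-homogeneous under `(w,v) ↦ (s²w, s^{p+3}v)` and each
component of `FMEMS` converges to it at the appropriate rate, uniformly on
`{w^{2(p+3)} + v⁴ = 1}` and compact `r`-sets in `(0,∞)`; (b) if `p` is odd, the same
holds with type `(0,1,(p+3)/2)`, order `(p+3)/2` (`k = (p+1)/2`), scalings
`(w,v) ↦ (sw, s^{(p+3)/2}v)` and uniformity on `{w^{p+3} + v² = 1}`. Hence `FMEMS` is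
asymptotically quasi-homogeneous of the stated type and order in each case. -/
theorem MEMS_asymptotically_quasi_homogeneous (n : ℕ) (q : ℝ) (p : ℕ) (hp : 2 ≤ p) :
    (Even p →
      (∀ s : ℝ, 0 < s → ∀ r w v : ℝ,
        FMEMS₀ q p (r, s ^ 2 * w, s ^ (p + 3) * v)
          = (0, s ^ (p + 3) * v,
              s ^ (2 * p + 4) * (-(r ^ q) * w ^ (p + 2) + 2 * w⁻¹ * v ^ 2))) ∧
      (∀ δ > (0 : ℝ), ∀ K : Set ℝ, IsCompact K → K ⊆ Ioi 0 →
        ∃ s₀ > (0 : ℝ), ∀ s ≥ s₀, ∀ r ∈ K, ∀ w v : ℝ,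
          w ^ (2 * (p + 3)) + v ^ 4 = 1 →
          s ^ (-((p : ℝ) + 1)) *
            |(FMEMS n q p (r, s ^ 2 * w, s ^ (p + 3) * v)).1
              - s ^ (p + 1) * (FMEMS₀ q p (r, w, v)).1| < δ ∧
          s ^ (-((p : ℝ) + 3)) *
            |(FMEMS n q p (r, s ^ 2 * w, s ^ (p + 3) * v)).2.1
              - s ^ (p + 3) * (FMEMS₀ q p (r, w, v)).2.1| < δ ∧
          s ^ (-(2 * (p : ℝ) + 4)) *
            |(FMEMS n q p (r, s ^ 2 * w, s ^ (p + 3) * v)).2.2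
              - s ^ (2 * p + 4) * (FMEMS₀ q p (r, w, v)).2.2| < δ)) ∧
    (Odd p →
      (∀ s : ℝ, 0 < s → ∀ r w v : ℝ,
        FMEMS₀ q p (r, s * w, s ^ ((p + 3) / 2) * v)
          = (0, s ^ ((p + 3) / 2) * v,
              s ^ (p + 2) * (-(r ^ q) * w ^ (p + 2) + 2 * w⁻¹ * v ^ 2))) ∧
      (∀ δ > (0 : ℝ), ∀ K : Set ℝ, IsCompact K → K ⊆ Ioi 0 →
        ∃ s₀ > (0 : ℝ), ∀ s ≥ s₀, ∀ r ∈ K, ∀ w v : ℝ,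
          w ^ (p + 3) + v ^ 2 = 1 →
          s ^ (-(((p : ℝ) + 1) / 2)) *
            |(FMEMS n q p (r, s * w, s ^ ((p + 3) / 2) * v)).1
              - s ^ ((p + 1) / 2) * (FMEMS₀ q p (r, w, v)).1| < δ ∧
          s ^ (-(((p : ℝ) + 3) / 2)) *
            |(FMEMS n q p (r, s * w, s ^ ((p + 3) / 2) * v)).2.1
              - s ^ ((p + 3) / 2) * (FMEMS₀ q p (r, w, v)).2.1| < δ ∧
          s ^ (-((p : ℝ) + 2)) *
            |(FMEMS n q p (r, s * w, s ^ ((p + 3) / 2) * v)).2.2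
              - s ^ (p + 2) * (FMEMS₀ q p (r, w, v)).2.2| < δ)) := by
  constructor
  · intro _hpe
    constructor
    · intro s hs r w v
      simp only [FMEMS₀, Prod.mk.injEq]
      refine ⟨trivial, trivial, ?_⟩
      linear_combination (2*w⁻¹*v^2) * pow_inv_helper s hs.ne' 2 (2*p+4) (2*p+6) (by ring)
    · intro δ hδ K hK hKsub
      rcases K.eq_empty_or_nonempty with hKe | hKne
      · exact ⟨1, one_pos, fun s _ r hr => by simp [hKe] at hr⟩
      have hcK : sInf K ∈ K := hK.sInf_mem hKne
      have hc0 : 0 < sInf K := hKsub hcK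
      set c := sInf K with hc
      set A : ℝ := |(n:ℝ)-1|/c + 1 with hAdef
      have hA1 : 1 ≤ A := by
        rw [hAdef]
        have : 0 ≤ |(n:ℝ)-1|/c := by positivity
        linarith
      refine ⟨max 1 (A/δ + 1), lt_of_lt_of_le one_pos (le_max_left _ _), ?_⟩
      intro s hs r hr w v hcon
      have hs1 : 1 ≤ s := le_trans (le_max_left _ _) hs
      have hs0 : 0 < s := lt_of_lt_of_le one_pos hs1
      have hsA : A < s * δ := by
        have h2 : A/δ < s := by
          have := le_trans (le_max_right 1 (A/δ + 1)) hs
          linarith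
        calc A = A/δ * δ := by field_simp
          _ < s * δ := by exact mul_lt_mul_of_pos_right h2 hδ
      have hrc : c ≤ r := csInf_le hK.bddBelow hr
      have hr0 : 0 < r := hKsub hr
      have hv1 : |v| ≤ 1 := by
        have hw0 : 0 ≤ w^(2*(p+3)) := by rw [pow_mul]; positivity
        have h4 : |v|^4 ≤ 1 := by rw [← abs_pow, abs_of_nonneg (by positivity : (0:ℝ) ≤ v^4)]; linarith
        exact (pow_le_one_iff_of_nonneg (abs_nonneg v) (by norm_num)).1 h4
      have hb : |(((n:ℝ)-1)/r) * v| ≤ A := by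
        rw [abs_mul, abs_div, abs_of_pos hr0]
        have hdd : |(n:ℝ)-1|/r ≤ |(n:ℝ)-1|/c := by gcongr
        calc |(n:ℝ)-1|/r * |v| ≤ |(n:ℝ)-1|/c * 1 :=
              mul_le_mul hdd hv1 (abs_nonneg v) (by positivity)
          _ ≤ A := by rw [mul_one, hAdef]; linarith
      have hep : (0:ℝ) ≤ (p:ℝ) := Nat.cast_nonneg p
      refine ⟨?_, ?_, ?_⟩
      · simp only [FMEMS, FMEMS₀]
        rw [show |(1:ℝ) - s^(p+1)*0| = 1 by norm_num]
        exact aux_key s _ A 1 δ hs1 (by linarith) zero_le_one hA1 hsA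
      · simp only [FMEMS, FMEMS₀]
        rw [sub_self, abs_zero, mul_zero]
        exact hδ
      · simp only [FMEMS, FMEMS₀]
        have hD : (-((((n:ℝ)-1))/r) * (s^(p+3)*v) - r^q*(s^2*w)^(p+2)
              + 2*(s^2*w)⁻¹*(s^(p+3)*v)^2)
            - s^(2*p+4)*(-(r^q)*w^(p+2)+2*w⁻¹*v^2)
            = -((((n:ℝ)-1))/r)*(s^(p+3)*v) := by
          linear_combination (2*w⁻¹*v^2) * pow_inv_helper s hs0.ne' 2 (2*p+4) (2*p+6) (by ring)
        rw [hD, habs s _ v hs0 (p+3),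
          collapse s hs0 _ (-((p:ℝ)+1)) (p+3) (by push_cast; ring)]
        exact aux_key s _ A _ δ hs1 (by linarith) (abs_nonneg _) hb hsA
  · intro hodd
    obtain ⟨m, hm⟩ := hodd
    have hm' : p = 2*m+1 := by omega
    subst hm'
    have e1 : (2*m+1+3)/2 = m+2 := by omega
    have e2 : (2*m+1+1)/2 = m+1 := by omega
    constructor
    · intro s hs r w v
      simp only [FMEMS₀, e1, Prod.mk.injEq]
      refine ⟨trivial, trivial, ?_⟩
      linear_combination (2*w⁻¹*v^2) * pow_inv_helper s hs.ne' 1 (2*m+3) (2*m+4) (by ring)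
    · intro δ hδ K hK hKsub
      rcases K.eq_empty_or_nonempty with hKe | hKne
      · exact ⟨1, one_pos, fun s _ r hr => by simp [hKe] at hr⟩
      have hcK : sInf K ∈ K := hK.sInf_mem hKne
      have hc0 : 0 < sInf K := hKsub hcK
      set c := sInf K with hc
      set A : ℝ := |(n:ℝ)-1|/c + 1 with hAdef
      have hA1 : 1 ≤ A := by
        rw [hAdef]
        have : 0 ≤ |(n:ℝ)-1|/c := by positivity
        linarith
      refine ⟨max 1 (A/δ + 1), lt_of_lt_of_le one_pos (le_max_left _ _), ?_⟩
      intro s hs r hr w v hcon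
      have hs1 : 1 ≤ s := le_trans (le_max_left _ _) hs
      have hs0 : 0 < s := lt_of_lt_of_le one_pos hs1
      have hsA : A < s * δ := by
        have h2 : A/δ < s := by
          have := le_trans (le_max_right 1 (A/δ + 1)) hs
          linarith
        calc A = A/δ * δ := by field_simp
          _ < s * δ := by exact mul_lt_mul_of_pos_right h2 hδ
      have hrc : c ≤ r := csInf_le hK.bddBelow hr
      have hr0 : 0 < r := hKsub hr
      have hv1 : |v| ≤ 1 := by
        have hw0 : 0 ≤ w^(2*m+1+3) := by
          rw [show 2*m+1+3 = 2*(m+2) from by ring, pow_mul]; positivity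
        have h4 : |v|^2 ≤ 1 := by rw [sq_abs]; linarith
        exact (pow_le_one_iff_of_nonneg (abs_nonneg v) (by norm_num)).1 h4
      have hb : |(((n:ℝ)-1)/r) * v| ≤ A := by
        rw [abs_mul, abs_div, abs_of_pos hr0]
        have hdd : |(n:ℝ)-1|/r ≤ |(n:ℝ)-1|/c := by gcongr
        calc |(n:ℝ)-1|/r * |v| ≤ |(n:ℝ)-1|/c * 1 :=
              mul_le_mul hdd hv1 (abs_nonneg v) (by positivity)
          _ ≤ A := by rw [mul_one, hAdef]; linarith
      have hem : (0:ℝ) ≤ (m:ℝ) := Nat.cast_nonneg m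
      refine ⟨?_, ?_, ?_⟩
      · simp only [FMEMS, FMEMS₀, e2]
        rw [show |(1:ℝ) - s^(m+1)*0| = 1 by norm_num]
        exact aux_key s _ A 1 δ hs1 (by push_cast; linarith) zero_le_one hA1 hsA
      · simp only [FMEMS, FMEMS₀, e1]
        rw [sub_self, abs_zero, mul_zero]
        exact hδ
      · simp only [FMEMS, FMEMS₀, e1]
        have hD : (-((((n:ℝ)-1))/r) * (s^(m+2)*v) - r^q*(s*w)^(2*m+1+2)
              + 2*(s*w)⁻¹*(s^(m+2)*v)^2)
            - s^(2*m+1+2)*(-(r^q)*w^(2*m+1+2)+2*w⁻¹*v^2)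
            = -((((n:ℝ)-1))/r)*(s^(m+2)*v) := by
          linear_combination (2*w⁻¹*v^2) * pow_inv_helper s hs0.ne' 1 (2*m+3) (2*m+4) (by ring)
        rw [hD, habs s _ v hs0 (m+2),
          collapse s hs0 _ (-((m:ℝ)+1)) (m+2) (by push_cast; ring)]
        exact aux_key s _ A _ δ hs1 (by linarith) (abs_nonneg _) hb hsA
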